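/- For all real numbers x, y and every natural number n, the bivariate Bell polynomial satisfies B_n(x;y) = ( ₍B₎E_n(x+1;y) + ₍B₎E_n(x;y) ) / 2, where ₍B₎E_n(x;y) denotes the Bell-based Euler polynomial of order 1. -/

import Mathlib

open PowerSeries Finset

/-- The series `e^{x t}`. -/
noncomputable def expXT (x : ℝ) : PowerSeries ℝ :=
  PowerSeries.rescale x (PowerSeries.exp ℝ)

/-- The series `e^{y (e^t - 1)} = ∑_{k ≥ 0} y^k (e^t - 1)^k / k!`
(the inner sum is finite in each coefficient since `(e^t - 1)^k` has order `≥ k`). -/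
noncomputable def bellSeries (y : ℝ) : PowerSeries ℝ :=
  PowerSeries.mk fun n =>
    ∑ k ∈ Finset.range (n + 1),
      y ^ k * ((k.factorial : ℝ))⁻¹ * PowerSeries.coeff n ((PowerSeries.exp ℝ - 1) ^ k)

/-- The series `(2 / (e^t + 1))^α`. -/
noncomputable def eulerSeries (α : ℕ) : PowerSeries ℝ :=
  (2 * (PowerSeries.exp ℝ + 1)⁻¹) ^ α

/-- The Bell-based Euler polynomial `₍B₎E_n^(α)(x; y)`:
`n!` times the coefficient of `t^n` in `(2/(e^t+1))^α e^{xt + y(e^t-1)}`. -/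
noncomputable def bellEuler (α : ℕ) (x y : ℝ) (n : ℕ) : ℝ :=
  n.factorial * PowerSeries.coeff n (eulerSeries α * expXT x * bellSeries y)

/-- The bivariate Bell polynomial `B_n(x;y)` with
`∑ B_n(x;y) t^n/n! = e^{xt + y(e^t-1)}`. -/
noncomputable def bellPoly2 (x y : ℝ) (n : ℕ) : ℝ :=
  n.factorial * PowerSeries.coeff n (expXT x * bellSeries y)

/-!
Since `e^{(x+1)t} = e^t e^{xt}`, adding the generating functions of `₍B₎E_n(x+1;y)` and
`₍B₎E_n(x;y)` gives `(2/(e^t+1)) (e^t + 1) e^{xt + y(e^t-1)} = 2 e^{xt + y(e^t-1)}`.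
-/

theorem expXT_add (x y : ℝ) : expXT (x + y) = expXT x * expXT y := by
  rw [expXT, expXT, expXT, exp_mul_exp_eq_exp_add]

theorem expXT_one : expXT 1 = exp ℝ := by
  rw [expXT, rescale_one, RingHom.id_apply]

theorem eulerSeries_one_mul_exp_add_one : eulerSeries 1 * (exp ℝ + 1) = 2 := by
  have hunit : (exp ℝ + 1)⁻¹ * (exp ℝ + 1) = 1 :=
    PowerSeries.inv_mul_cancel _ (by simp [constantCoeff_exp])
  rw [eulerSeries, pow_one, mul_assoc, hunit, mul_one]

theorem eulerSeries_one_mul_expXT_add_one_add (x : ℝ) :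
    eulerSeries 1 * expXT (x + 1) + eulerSeries 1 * expXT x = 2 * expXT x := by
  calc eulerSeries 1 * expXT (x + 1) + eulerSeries 1 * expXT x
      = eulerSeries 1 * (exp ℝ + 1) * expXT x := by rw [expXT_add, expXT_one]; ring
    _ = 2 * expXT x := by rw [eulerSeries_one_mul_exp_add_one]

theorem stmt6 (x y : ℝ) (n : ℕ) :
    bellPoly2 x y n = (bellEuler 1 (x + 1) y n + bellEuler 1 x y n) / 2 := by
  have hsum : bellEuler 1 (x + 1) y n + bellEuler 1 x y n = 2 * bellPoly2 x y n := by
    rw [bellEuler, bellEuler, bellPoly2, ← mul_add, ← map_add, ← add_mul,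
      eulerSeries_one_mul_expXT_add_one_add, mul_assoc, ← map_ofNat C 2, coeff_C_mul]
    ring
  rw [hsum]
  ring
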